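/- arXiv:math/0610824 — 2 statements merged into one kernel-verified Lean document; each statement's English description precedes it below -/
import Mathlib

section
/- Let M be a countable set of probability densities on ℝ with a strictly positive prior π, let q, q' ∈ M with log q and log q' both r-integrable, and suppose L(q'‖r) < L(q‖r). If X_1, X_2, … are i.i.d. with density r and the posterior is well defined (0 < Σ_{p ∈ M} π(p) l_n(p) < ∞ almost surely for every n), then the posterior ratio π({q} | X^n) / π({q'} | X^n) → 0 almost surely as n → ∞. -/
open MeasureTheory ProbabilityTheory Filter Topology

/-- A probability density function on ℝ w.r.t. Lebesgue measure. -/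
def IsDensity (f : ℝ → ℝ) : Prop :=
  Measurable f ∧ (∀ x, 0 ≤ f x) ∧ (∫ x, f x) = 1

/-- The measure on ℝ with density `r` w.r.t. Lebesgue measure. -/
noncomputable def rMeasure (r : ℝ → ℝ) : Measure ℝ :=
  (volume : Measure ℝ).withDensity fun x => ENNReal.ofReal (r x)

/-- The L-divergence `L(q‖r) = -∫ r log q`. -/
noncomputable def Ldiv (q r : ℝ → ℝ) : ℝ := -∫ x, r x * Real.log (q x)

/-- The likelihood `l_n(q) = ∏_{i<n} q (X i ω)`. -/
noncomputable def lik {Ω : Type*} (X : ℕ → Ω → ℝ) (q : ℝ → ℝ) (n : ℕ) (ω : Ω) : ℝ :=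
  ∏ i ∈ Finset.range n, q (X i ω)

/-- Posterior probability of `A ⊆ M` given the sample `X_1 ω, …, X_n ω`,
for a prior `π` on the finite set `M` of densities. -/
noncomputable def post {Ω : Type*} (X : ℕ → Ω → ℝ) (π : (ℝ → ℝ) → ℝ)
    (M A : Finset (ℝ → ℝ)) (n : ℕ) (ω : Ω) : ℝ :=
  (∑ q ∈ A, π q * lik X q n ω) / (∑ q ∈ M, π q * lik X q n ω)

/-- `X_1, X_2, …` are i.i.d. with density `r`. -/
def IID {Ω : Type*} [MeasurableSpace Ω] (μ : Measure Ω) (X : ℕ → Ω → ℝ) (r : ℝ → ℝ) : Prop :=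
  (∀ i, Measurable (X i)) ∧ iIndepFun X μ ∧
    ∀ i, Measure.map (X i) μ = rMeasure r

lemma prod_div_prod_le_exp {ι : Type*} (s : Finset ι) (a b : ι → ℝ)
    (ha : ∀ i, 0 ≤ a i) (hb : ∀ i, 0 ≤ b i) :
    (∏ i ∈ s, a i) / (∏ i ∈ s, b i) ≤
      Real.exp (∑ i ∈ s, (Real.log (a i) - Real.log (b i))) := by
  by_cases hB : (∏ i ∈ s, b i) = 0
  · rw [hB, div_zero]; exact (Real.exp_pos _).le
  by_cases hA : (∏ i ∈ s, a i) = 0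
  · rw [hA, zero_div]; exact (Real.exp_pos _).le
  have hbne : ∀ i ∈ s, b i ≠ 0 := fun i hi h => hB (Finset.prod_eq_zero hi h)
  have hane : ∀ i ∈ s, a i ≠ 0 := fun i hi h => hA (Finset.prod_eq_zero hi h)
  have hBpos : 0 < ∏ i ∈ s, b i :=
    lt_of_le_of_ne (Finset.prod_nonneg fun i _ => hb i) (Ne.symm hB)
  have hApos : 0 < ∏ i ∈ s, a i :=
    lt_of_le_of_ne (Finset.prod_nonneg fun i _ => ha i) (Ne.symm hA)
  have : ∑ i ∈ s, (Real.log (a i) - Real.log (b i)) =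
      Real.log ((∏ i ∈ s, a i) / ∏ i ∈ s, b i) := by
    rw [Finset.sum_sub_distrib, ← Real.log_prod hane, ← Real.log_prod hbne,
      Real.log_div hA hB]
  rw [this, Real.exp_log (div_pos hApos hBpos)]

/-- for a countable model `M` with well-defined posterior, if
`L(q'‖r) < L(q‖r)` then the posterior ratio `π({q}|X^n)/π({q'}|X^n) → 0` a.s. -/
theorem posterior_ratio_tendsto_zero_countable
    {Ω : Type*} [MeasurableSpace Ω] (μ : Measure Ω) [IsProbabilityMeasure μ]
    (r : ℝ → ℝ) (hr : IsDensity r)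
    (M : Set (ℝ → ℝ)) (hMc : M.Countable) (hMd : ∀ p ∈ M, IsDensity p)
    (π : (ℝ → ℝ) → ℝ) (hπ : ∀ p ∈ M, 0 < π p)
    (hπ1 : ∑' p : M, π (p : ℝ → ℝ) = 1)
    (q q' : ℝ → ℝ) (hq : q ∈ M) (hq' : q' ∈ M)
    (hiq : Integrable (fun x => Real.log (q x)) (rMeasure r))
    (hiq' : Integrable (fun x => Real.log (q' x)) (rMeasure r))
    (hL : Ldiv q' r < Ldiv q r)
    (X : ℕ → Ω → ℝ) (hX : IID μ X r)
    (hwd : ∀ n : ℕ, ∀ᵐ ω ∂μ,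
      Summable (fun p : M => π (p : ℝ → ℝ) * lik X (p : ℝ → ℝ) n ω) ∧
      0 < ∑' p : M, π (p : ℝ → ℝ) * lik X (p : ℝ → ℝ) n ω) :
    ∀ᵐ ω ∂μ, Tendsto (fun n : ℕ =>
      ((π q * lik X q n ω) / ∑' p : M, π (p : ℝ → ℝ) * lik X (p : ℝ → ℝ) n ω) /
      ((π q' * lik X q' n ω) / ∑' p : M, π (p : ℝ → ℝ) * lik X (p : ℝ → ℝ) n ω))
      atTop (nhds 0) := by
  obtain ⟨hXm, hXind, hXmap⟩ := hX
  obtain ⟨hqm, hqnn, -⟩ := hMd q hq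
  obtain ⟨hq'm, hq'nn, -⟩ := hMd q' hq'
  set Y : ℝ → ℝ := fun x => Real.log (q x) - Real.log (q' x) with hYdef
  have hYmeas : Measurable Y :=
    (Real.measurable_log.comp hqm).sub (Real.measurable_log.comp hq'm)
  have hYint : Integrable Y (rMeasure r) := hiq.sub hiq'
  set Z : ℕ → Ω → ℝ := fun i ω => Y (X i ω) with hZdef
  have hZint : ∀ i, Integrable (Z i) μ := by
    intro i
    have h1 : Integrable Y (Measure.map (X i) μ) := by rw [hXmap i]; exact hYint
    exact (integrable_map_measure hYmeas.aestronglyMeasurable (hXm i).aemeasurable).mp h1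
  have hindep : Pairwise (Function.onFun (IndepFun · · μ) Z) := fun i j hij =>
    (hXind.indepFun hij).comp hYmeas hYmeas
  have hident : ∀ i, IdentDistrib (Z i) (Z 0) μ μ := by
    intro i
    have hXi : IdentDistrib (X i) (X 0) μ μ :=
      ⟨(hXm i).aemeasurable, (hXm 0).aemeasurable, by rw [hXmap i, hXmap 0]⟩
    exact hXi.comp hYmeas
  -- the mean of Z 0 is negative
  have keyint : ∀ f : ℝ → ℝ, (∫ x, Real.log (f x) ∂(rMeasure r)) =
      ∫ x, r x * Real.log (f x) := by
    intro f
    have hd : (fun x => ENNReal.ofReal (r x)) = fun x => ((Real.toNNReal (r x) : NNReal) : ENNReal) :=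
      rfl
    rw [rMeasure, hd, integral_withDensity_eq_integral_smul
      (show Measurable fun x => (r x).toNNReal from measurable_real_toNNReal.comp hr.1)]
    congr 1
    ext x
    rw [NNReal.smul_def, smul_eq_mul, Real.coe_toNNReal _ (hr.2.1 x)]
  have hmean : (μ[Z 0]) = Ldiv q' r - Ldiv q r := by
    have h0 : (μ[Z 0]) = ∫ x, Y x ∂(rMeasure r) := by
      rw [← hXmap 0, integral_map (hXm 0).aemeasurable hYmeas.aestronglyMeasurable]
    rw [h0, hYdef]
    rw [integral_sub hiq hiq', keyint q, keyint q', Ldiv, Ldiv]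
    ring
  have hc : (μ[Z 0]) < 0 := by rw [hmean]; linarith
  have hslln := strong_law_ae_real Z (hZint 0) hindep hident
  have hwd' : ∀ᵐ ω ∂μ, ∀ n : ℕ,
      Summable (fun p : M => π (p : ℝ → ℝ) * lik X (p : ℝ → ℝ) n ω) ∧
      0 < ∑' p : M, π (p : ℝ → ℝ) * lik X (p : ℝ → ℝ) n ω := ae_all_iff.mpr hwd
  filter_upwards [hwd', hslln] with ω hωwd hωs
  -- simplify the ratio
  have hsimp : ∀ n : ℕ,
      ((π q * lik X q n ω) / ∑' p : M, π (p : ℝ → ℝ) * lik X (p : ℝ → ℝ) n ω) /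
      ((π q' * lik X q' n ω) / ∑' p : M, π (p : ℝ → ℝ) * lik X (p : ℝ → ℝ) n ω) =
      (π q * lik X q n ω) / (π q' * lik X q' n ω) := by
    intro n
    rw [div_div_div_comm, div_self (ne_of_gt (hωwd n).2), div_one]
  have hmain : Tendsto (fun n : ℕ => (π q * lik X q n ω) / (π q' * lik X q' n ω))
      atTop (𝓝 0) := by
    set T : ℕ → ℝ := fun n => ∑ i ∈ Finset.range n, Z i ω with hTdef
    have hTbot : Tendsto T atTop atBot := by
      have h1 : Tendsto (fun n : ℕ => (T n / n) * n) atTop atBot :=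
        Tendsto.neg_mul_atTop hc hωs tendsto_natCast_atTop_atTop
      have heq : (fun n : ℕ => (T n / n) * n) =ᶠ[atTop] T := by
        filter_upwards [eventually_ge_atTop 1] with n hn
        have hn0 : (n : ℝ) ≠ 0 := Nat.cast_ne_zero.mpr (by omega)
        field_simp
      exact h1.congr' heq
    have hexp : Tendsto (fun n => Real.exp (T n)) atTop (𝓝 0) :=
      Real.tendsto_exp_atBot.comp hTbot
    have hexp' : Tendsto (fun n => (π q / π q') * Real.exp (T n)) atTop (𝓝 0) := by
      simpa using hexp.const_mul (π q / π q')
    apply squeeze_zero (fun n => ?_) (fun n => ?_) hexp'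
    · exact div_nonneg (mul_nonneg (hπ q hq).le (Finset.prod_nonneg fun i _ => hqnn _))
        (mul_nonneg (hπ q' hq').le (Finset.prod_nonneg fun i _ => hq'nn _))
    · rw [mul_div_mul_comm]
      refine mul_le_mul_of_nonneg_left ?_ (div_nonneg (hπ q hq).le (hπ q' hq').le)
      exact prod_div_prod_le_exp (Finset.range n) (fun i => q (X i ω))
        (fun i => q' (X i ω)) (fun i => hqnn _) (fun i => hq'nn _)
  exact hmain.congr fun n => (hsimp n).symm
end

section
/- Let M be a nonempty finite set of probability densities on ℝ such that log p is r-integrable for each p ∈ M, let π be a strictly positive prior on M, let q̂ be an L-projection of r on M, and let q ∈ M satisfy L(q‖r) > L(q̂‖r). If X_1, X_2, … are i.i.d. with density r, then the posterior ratio π({q} | X^n) / π({q̂} | X^n) → 0 almost surely (hence also in probability) as n → ∞. -/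
open MeasureTheory ProbabilityTheory Filter

/-- if `q̂` is an L-projection of `r` on `M` and `q ∈ M` has
`L(q‖r) > L(q̂‖r)`, then `π({q}|X^n)/π({q̂}|X^n) → 0` almost surely. -/
theorem posterior_ratio_to_Lprojection_tendsto_zero
    {Ω : Type*} [MeasurableSpace Ω] (μ : Measure Ω) [IsProbabilityMeasure μ]
    (r : ℝ → ℝ) (hr : IsDensity r)
    (M : Finset (ℝ → ℝ)) (hM : M.Nonempty) (hMd : ∀ p ∈ M, IsDensity p)
    (hint : ∀ p ∈ M, Integrable (fun x => Real.log (p x)) (rMeasure r))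
    (π : (ℝ → ℝ) → ℝ) (hπ : ∀ p ∈ M, 0 < π p) (hπ1 : ∑ p ∈ M, π p = 1)
    (qhat : ℝ → ℝ) (hqhatM : qhat ∈ M)
    (hqhat : ∀ p ∈ M, Ldiv qhat r ≤ Ldiv p r)
    (q : ℝ → ℝ) (hqM : q ∈ M) (hq : Ldiv qhat r < Ldiv q r)
    (X : ℕ → Ω → ℝ) (hX : IID μ X r) :
    ∀ᵐ ω ∂μ, Tendsto
      (fun n : ℕ => post X π M {q} n ω / post X π M {qhat} n ω)
      atTop (nhds 0) := by
  obtain ⟨hXm, hXindep, hXmap⟩ := hX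
  obtain ⟨hqm, hq0, -⟩ := hMd q hqM
  obtain ⟨hqhm, hqh0, -⟩ := hMd qhat hqhatM
  obtain ⟨hrm, hr0, -⟩ := hr
  set g : ℝ → ℝ := fun x => Real.log (q x) - Real.log (qhat x) with hgdef
  have hgm : Measurable g :=
    (Real.measurable_log.comp hqm).sub (Real.measurable_log.comp hqhm)
  -- integrals against rMeasure
  have key : ∀ f : ℝ → ℝ, ∫ x, f x ∂(rMeasure r) = ∫ x, r x * f x := by
    intro f
    rw [rMeasure, show (fun x => ENNReal.ofReal (r x))
        = (fun x => ((Real.toNNReal (r x) : NNReal) : ENNReal)) from rfl,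
      integral_withDensity_eq_integral_smul (f := fun x => (r x).toNNReal)
        (hrm.real_toNNReal) f]
    congr 1; ext x
    rw [NNReal.smul_def, smul_eq_mul, Real.coe_toNNReal _ (hr0 x)]
  set δ : ℝ := Ldiv q r - Ldiv qhat r with hδdef
  have hδ : 0 < δ := sub_pos.mpr hq
  have hgInt : Integrable g (rMeasure r) := (hint q hqM).sub (hint qhat hqhatM)
  have hgIntegral : ∫ x, g x ∂(rMeasure r) = -δ := by
    rw [hgdef, integral_sub (hint q hqM) (hint qhat hqhatM), key, key]
    simp only [hδdef, Ldiv]; ring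
  -- the iid variables g ∘ X i
  set Y : ℕ → Ω → ℝ := fun i ω => g (X i ω) with hYdef
  have hYint : Integrable (Y 0) μ := by
    have h1 : Integrable g (Measure.map (X 0) μ) := by rw [hXmap 0]; exact hgInt
    exact (integrable_map_measure hgm.aestronglyMeasurable (hXm 0).aemeasurable).mp h1
  have hYindep : Pairwise (Function.onFun (IndepFun · · μ) Y) := fun i j hij =>
    (hXindep.indepFun hij).comp hgm hgm
  have hYident : ∀ i, IdentDistrib (Y i) (Y 0) μ μ := fun i =>
    IdentDistrib.comp ⟨(hXm i).aemeasurable, (hXm 0).aemeasurable,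
      by rw [hXmap i, hXmap 0]⟩ hgm
  have hYmean : μ[Y 0] = -δ := by
    have := integral_map (μ := μ) (hXm 0).aemeasurable (hgm.aestronglyMeasurable (μ := Measure.map (X 0) μ))
    rw [hXmap 0, hgIntegral] at this
    exact this.symm
  have slln := strong_law_ae_real Y hYint hYindep hYident
  rw [hYmean] at slln
  filter_upwards [slln] with ω hω
  set S : ℕ → ℝ := fun n => ∑ i ∈ Finset.range n, g (X i ω) with hSdef
  -- S n → -∞
  have hSbot : Tendsto S atTop atBot := by
    have hev : ∀ᶠ n : ℕ in atTop, S n / n < -δ / 2 :=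
      hω.eventually_lt_const (by linarith)
    have hle : ∀ᶠ n : ℕ in atTop, S n ≤ (-δ / 2) * n := by
      filter_upwards [hev, eventually_ge_atTop 1] with n hn hn1
      have hnpos : (0:ℝ) < n := by exact_mod_cast hn1
      calc S n = (S n / n) * n := by field_simp
        _ ≤ (-δ / 2) * n := by nlinarith [hn]
    have hbot : Tendsto (fun n : ℕ => (-δ / 2) * (n:ℝ)) atTop atBot := by
      have : Tendsto (fun n : ℕ => (δ / 2) * (n:ℝ)) atTop atTop :=
        (tendsto_natCast_atTop_atTop (R := ℝ)).const_mul_atTop (by linarith)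
      have h2 : Tendsto (fun n : ℕ => -((δ / 2) * (n:ℝ))) atTop atBot :=
        tendsto_neg_atTop_atBot.comp this
      have h3 : (fun n : ℕ => (-δ / 2) * (n:ℝ)) = fun n : ℕ => -((δ / 2) * (n:ℝ)) := by
        ext n; ring
      rw [h3]; exact h2
    exact tendsto_atBot_mono' atTop hle hbot
  have hexp : Tendsto (fun n => Real.exp (S n)) atTop (nhds 0) :=
    Real.tendsto_exp_atBot.comp hSbot
  set C : ℝ := π q / π qhat with hCdef
  have hCpos : 0 < C := div_pos (hπ q hqM) (hπ qhat hqhatM)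
  -- nonnegativity
  have hliknn : ∀ p, (∀ x, 0 ≤ p x) → ∀ n, 0 ≤ lik X p n ω := fun p hp n =>
    Finset.prod_nonneg fun i _ => hp _
  have hDnn : ∀ n, 0 ≤ ∑ p ∈ M, π p * lik X p n ω := fun n =>
    Finset.sum_nonneg fun p hp => mul_nonneg (hπ p hp).le (hliknn p (hMd p hp).2.1 n)
  -- the key bound
  have hub : ∀ n, post X π M {q} n ω / post X π M {qhat} n ω ≤ C * Real.exp (S n) := by
    intro n
    by_cases hz : lik X qhat n ω = 0
    · simp only [post, Finset.sum_singleton, hz, mul_zero, zero_div, div_zero]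
      positivity
    · have hlqh : 0 < lik X qhat n ω :=
        lt_of_le_of_ne (hliknn qhat hqh0 n) (Ne.symm hz)
      have hD : 0 < ∑ p ∈ M, π p * lik X p n ω := by
        have h1 : π qhat * lik X qhat n ω ≤ ∑ p ∈ M, π p * lik X p n ω :=
          Finset.single_le_sum (f := fun p => π p * lik X p n ω)
            (fun p hp => mul_nonneg (hπ p hp).le (hliknn p (hMd p hp).2.1 n)) hqhatM
        exact lt_of_lt_of_le (mul_pos (hπ qhat hqhatM) hlqh) h1
      have hratio : post X π M {q} n ω / post X π M {qhat} n ω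
          = (π q * lik X q n ω) / (π qhat * lik X qhat n ω) := by
        simp only [post, Finset.sum_singleton]
        rw [div_div_div_cancel_right₀]
        exact hD.ne'
      rw [hratio]
      -- each qhat (X i ω) is positive
      have hqhpos : ∀ i ∈ Finset.range n, 0 < qhat (X i ω) := by
        intro i hi
        rcases lt_or_eq_of_le (hqh0 (X i ω)) with h | h
        · exact h
        · exact absurd (Finset.prod_eq_zero hi h.symm) hz
      have hlqheq : lik X qhat n ω
          = Real.exp (∑ i ∈ Finset.range n, Real.log (qhat (X i ω))) := by
        rw [Real.exp_sum]
        exact Finset.prod_congr rfl fun i hi => (Real.exp_log (hqhpos i hi)).symm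
      have hlqle : lik X q n ω
          ≤ Real.exp (∑ i ∈ Finset.range n, Real.log (q (X i ω))) := by
        rw [Real.exp_sum]
        exact Finset.prod_le_prod (fun i _ => hq0 _) fun i _ => Real.le_exp_log _
      have hSsplit : Real.exp (S n)
          = Real.exp (∑ i ∈ Finset.range n, Real.log (q (X i ω)))
            / Real.exp (∑ i ∈ Finset.range n, Real.log (qhat (X i ω))) := by
        rw [← Real.exp_sub, hSdef]
        congr 1
        rw [hgdef]
        exact Finset.sum_sub_distrib (f := fun i => Real.log (q (X i ω))) (g := fun i => Real.log (qhat (X i ω)))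
      rw [hSsplit, hCdef, hlqheq]
      rw [div_mul_div_comm]
      exact div_le_div₀
        (mul_nonneg (hπ q hqM).le (Real.exp_pos _).le)
        (mul_le_mul_of_nonneg_left hlqle (hπ q hqM).le)
        (mul_pos (hπ qhat hqhatM) (Real.exp_pos _)) le_rfl
  have hlb : ∀ n, 0 ≤ post X π M {q} n ω / post X π M {qhat} n ω := by
    intro n
    have h1 : 0 ≤ post X π M {q} n ω := by
      apply div_nonneg _ (hDnn n)
      rw [Finset.sum_singleton]
      exact mul_nonneg (hπ q hqM).le (hliknn q hq0 n)
    have h2 : 0 ≤ post X π M {qhat} n ω := by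
      apply div_nonneg _ (hDnn n)
      rw [Finset.sum_singleton]
      exact mul_nonneg (hπ qhat hqhatM).le (hliknn qhat hqh0 n)
    exact div_nonneg h1 h2
  have hlim : Tendsto (fun n => C * Real.exp (S n)) atTop (nhds 0) := by
    have := hexp.const_mul C
    simpa using this
  exact squeeze_zero hlb hub hlim
end
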